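/- Let A ∈ ℚ^{m×n} be rational, b ∈ ℝᵐ (not necessarily rational), P = {x : Ax ≥ b}, and let F be a face of P of the form F = P ∩ {x : αᵀx = β} for some integral α. Then for every t ∈ ℕ, the t-th Chvátal closure of F equals the intersection of the t-th Chvátal closure of P with F: F^{(t)} = P^{(t)} ∩ F. -/

import Mathlib

/-- The Chvátal closure of a set P ⊆ ℝⁿ: the intersection, over all inequalities
cᵀx ≥ d valid for P with c integral, of the halfspaces {x : cᵀx ≥ ⌈d⌉}. -/
def chvatalClosure {n : ℕ} (P : Set (Fin n → ℝ)) : Set (Fin n → ℝ) :=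
  {x | ∀ (c : Fin n → ℤ) (d : ℝ), (∀ y ∈ P, d ≤ ∑ i, (c i : ℝ) * y i) →
        (⌈d⌉ : ℝ) ≤ ∑ i, (c i : ℝ) * x i}

/-- The t-th iterated Chvátal closure. -/
def chvatalIter {n : ℕ} (t : ℕ) (P : Set (Fin n → ℝ)) : Set (Fin n → ℝ) :=
  chvatalClosure^[t] P

/-!
Write `H = {x | αᵀx = β}`. As `F = P ∩ H`, induction on `t` reduces the theorem to the identity
`(Q ∩ H)' = Q' ∩ H` for `Q = P⁽ᵗ⁾`, which is again a polyhedron with integral constraint matrix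
(Schrijver) and is contained in `P`, so `αᵀx ≥ β` is valid on it.

For that identity let `x ∈ Q' ∩ H` and let `cᵀx ≥ d` be valid on `Q ∩ H`. Farkas' lemma gives
`λ ≥ 0` such that `(c + λα)ᵀx ≥ d + λβ` is valid on `Q`; it stays valid when `λ` is replaced by
`μ = ⌈λ⌉`, because `αᵀx ≥ β` on `Q`. The cut `αᵀx ≥ β` of `Q` forces `β ∈ ℤ` (as `αᵀx = β`), so
`⌈d + μβ⌉ = ⌈d⌉ + μβ`, and the rotated cut evaluated at `x` yields `cᵀx ≥ ⌈d⌉`.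

Farkas' lemma follows by separating a point from the finitely generated cone of the homogenised
system; such cones are closed by the conic Carathéodory argument.
-/

open Finset Matrix

section FinsetCone

variable {ι E : Type*} [AddCommGroup E] [Module ℝ E]

def finsetCone (w : ι → E) (S : Finset ι) : Set E :=
  {z | ∃ y : ι → ℝ, (∀ i ∈ S, 0 ≤ y i) ∧ ∑ i ∈ S, y i • w i = z}

lemma convex_finsetCone (w : ι → E) (S : Finset ι) : Convex ℝ (finsetCone w S) := by
  rintro _ ⟨y₁, hy₁, rfl⟩ _ ⟨y₂, hy₂, rfl⟩ a b ha hb -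
  refine ⟨a • y₁ + b • y₂, fun i hi => ?_, ?_⟩
  · simpa using add_nonneg (mul_nonneg ha (hy₁ i hi)) (mul_nonneg hb (hy₂ i hi))
  · simp only [smul_sum, Pi.add_apply, Pi.smul_apply, smul_eq_mul, add_smul, mul_smul,
      sum_add_distrib]

lemma smul_mem_finsetCone (w : ι → E) {S : Finset ι} {i : ι} (hi : i ∈ S) {s : ℝ} (hs : 0 ≤ s) :
    s • w i ∈ finsetCone w S := by
  classical
  refine ⟨Pi.single i s, fun j _ => ?_, ?_⟩
  · by_cases h : j = i
    · subst h; simpa using hs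
    · simp [h]
  · rw [sum_eq_single_of_mem i hi fun j _ hj => by simp [hj]]
    simp

lemma finsetCone_erase_subset [DecidableEq ι] (w : ι → E) (S : Finset ι) (i : ι) :
    finsetCone w (S.erase i) ⊆ finsetCone w S := by
  rintro _ ⟨y, hy, rfl⟩
  refine ⟨Function.update y i 0, fun j hj => ?_, ?_⟩
  · by_cases h : j = i
    · simp [h]
    · simpa [h] using hy j (mem_erase.2 ⟨h, hj⟩)
  · rw [← sum_erase S (a := i) (by simp)]
    exact sum_congr rfl fun j hj => by rw [Function.update_of_ne (ne_of_mem_erase hj)]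

/-- Move along a linear dependence of the generators until a coefficient vanishes. -/
lemma finsetCone_subset_iUnion_erase [DecidableEq ι] (w : ι → E) {S : Finset ι}
    (hS : ¬LinearIndepOn ℝ w (S : Set ι)) :
    finsetCone w S ⊆ ⋃ i ∈ S, finsetCone w (S.erase i) := by
  rintro _ ⟨y, hy, rfl⟩
  obtain ⟨g, hg, hpos⟩ : ∃ g : ι → ℝ, ∑ i ∈ S, g i • w i = 0 ∧ ∃ i ∈ S, 0 < g i := by
    simp only [linearIndepOn_finset_iff, not_forall] at hS
    obtain ⟨g, hg, i, hi, hgi⟩ := hS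
    rcases lt_or_gt_of_ne hgi with hneg | hpos
    · exact ⟨-g, by simp [neg_smul, hg], i, hi, by simpa using hneg⟩
    · exact ⟨g, hg, i, hi, hpos⟩
  obtain ⟨i₀, hi₀, hmin⟩ := (S.filter (0 < g ·)).exists_min_image (fun i => y i / g i)
    (by simpa [Finset.Nonempty] using hpos)
  rw [mem_filter] at hi₀
  set t := y i₀ / g i₀
  have ht : 0 ≤ t := div_nonneg (hy i₀ hi₀.1) hi₀.2.le
  refine Set.mem_iUnion₂.2 ⟨i₀, hi₀.1, y - t • g, fun j hj => ?_, ?_⟩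
  · have hj' := mem_erase.1 hj |>.2
    rcases lt_or_ge 0 (g j) with hgj | hgj
    · have := (le_div_iff₀ hgj).1 (hmin j (mem_filter.2 ⟨hj', hgj⟩))
      simp only [Pi.sub_apply, Pi.smul_apply, smul_eq_mul]
      linarith
    · simp only [Pi.sub_apply, Pi.smul_apply, smul_eq_mul]
      nlinarith [hy j hj']
  · have hzero : (y - t • g) i₀ • w i₀ = 0 := by
      simp [t, div_mul_cancel₀ _ hi₀.2.ne']
    rw [sum_erase S hzero]
    simp only [Pi.sub_apply, Pi.smul_apply, smul_eq_mul, sub_smul, mul_smul, sum_sub_distrib,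
      ← smul_sum, hg, smul_zero, sub_zero]

variable [TopologicalSpace E] [IsTopologicalAddGroup E] [ContinuousSMul ℝ E] [T2Space E]

lemma isClosed_finsetCone_of_linearIndepOn (w : ι → E) {S : Finset ι}
    (hS : LinearIndepOn ℝ w (S : Set ι)) : IsClosed (finsetCone w S) := by
  classical
  set Φ := Fintype.linearCombination ℝ (fun i : S => w i)
  have hΦ : Topology.IsClosedEmbedding Φ :=
    LinearMap.isClosedEmbedding_of_injective
      (LinearMap.ker_eq_bot.2 hS.fintypeLinearCombination_injective)
  convert hΦ.isClosedMap _ (isClosed_Ici (a := (0 : S → ℝ)))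
  ext z
  constructor
  · rintro ⟨y, hy, rfl⟩
    exact ⟨fun i => y i, fun i => hy i i.2, by
      simp [Φ, Fintype.linearCombination_apply, sum_attach S (fun i => y i • w i)]⟩
  · rintro ⟨y, hy, rfl⟩
    refine ⟨fun i => if h : i ∈ S then y ⟨i, h⟩ else 0, fun i hi => by simpa [hi] using hy ⟨i, hi⟩,
      ?_⟩
    rw [← sum_coe_sort S]
    simp [Φ, Fintype.linearCombination_apply]

lemma isClosed_finsetCone (w : ι → E) (S : Finset ι) :
    IsClosed (finsetCone w S) := by
  classical
  induction S using Finset.strongInduction with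
  | H S ih =>
    by_cases hS : LinearIndepOn ℝ w (S : Set ι)
    · exact isClosed_finsetCone_of_linearIndepOn w hS
    · have : finsetCone w S = ⋃ i ∈ S, finsetCone w (S.erase i) :=
        (finsetCone_subset_iUnion_erase w hS).antisymm
          (Set.iUnion₂_subset fun i _ => finsetCone_erase_subset w S i)
      rw [this]
      exact isClosed_biUnion_finset fun i hi => ih _ (erase_ssubset hi)

end FinsetCone

section Farkas

variable {ι σ : Type*} [Fintype σ]

lemma exists_dotProduct_add_mul_eq (f : ((σ → ℝ) × ℝ) →ₗ[ℝ] ℝ) :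
    ∃ (q : σ → ℝ) (e : ℝ), ∀ x t, f (x, t) = q ⬝ᵥ x + e * t := by
  classical
  refine ⟨fun j => f (fun k => if j = k then 1 else 0, 0), f (0, 1), fun x t => ?_⟩
  have hx := (f ∘ₗ LinearMap.inl ℝ _ ℝ).pi_apply_eq_sum_univ x
  simp only [LinearMap.comp_apply, LinearMap.inl_apply, smul_eq_mul] at hx
  calc f (x, t) = f (x, 0) + t • f (0, 1) := by rw [← map_smul, ← map_add]; simp
    _ = _ := by rw [hx, smul_eq_mul, mul_comm t, dotProduct_comm]; rfl

variable {A : Matrix ι σ ℝ} {δ : ι → ℝ} {c : σ → ℝ} {d : ℝ}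

lemma dotProduct_add_mul_nonpos_of_forall_le (hne : ∃ x, δ ≤ A *ᵥ x)
    (hval : ∀ x, δ ≤ A *ᵥ x → d ≤ c ⬝ᵥ x) {q : σ → ℝ} {e : ℝ} (he : 0 ≤ e)
    (hq : ∀ i, q ⬝ᵥ A i + e * δ i ≤ 0) : q ⬝ᵥ c + e * d ≤ 0 := by
  rcases he.lt_or_eq with he | rfl
  · have hd := hval (-e⁻¹ • q) fun i => by
      have : e * δ i ≤ e * (A i ⬝ᵥ -e⁻¹ • q) := by
        rw [dotProduct_smul, smul_eq_mul, ← mul_assoc, mul_neg, mul_inv_cancel₀ he.ne',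
          dotProduct_comm]
        linarith [hq i]
      exact le_of_mul_le_mul_left this he
    rw [dotProduct_smul, smul_eq_mul, dotProduct_comm] at hd
    have := mul_le_mul_of_nonneg_left hd he.le
    have hcancel : e * (-e⁻¹ * q ⬝ᵥ c) = -(q ⬝ᵥ c) := by field_simp
    linarith
  · obtain ⟨x₀, hx₀⟩ := hne
    by_contra! hqc
    rw [zero_mul, add_zero] at hqc
    -- moving from `x₀` along `-q` stays feasible but makes `c ⬝ᵥ x` arbitrarily small
    set s := (c ⬝ᵥ x₀ - d + 1) / (q ⬝ᵥ c)
    have hs : 0 ≤ s := div_nonneg (by linarith [hval x₀ hx₀]) hqc.le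
    have hd := hval (x₀ - s • q) fun i => by
      have : A i ⬝ᵥ q ≤ 0 := by rw [dotProduct_comm]; simpa using hq i
      have : δ i ≤ A i ⬝ᵥ x₀ := hx₀ i
      show δ i ≤ A i ⬝ᵥ (x₀ - s • q)
      rw [dotProduct_sub, dotProduct_smul, smul_eq_mul]
      nlinarith
    rw [dotProduct_sub, dotProduct_smul, smul_eq_mul, dotProduct_comm c q,
      div_mul_cancel₀ _ hqc.ne'] at hd
    linarith

theorem exists_nonneg_vecMul_eq_of_forall_le [Fintype ι] (hne : ∃ x, δ ≤ A *ᵥ x)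
    (hval : ∀ x, δ ≤ A *ᵥ x → d ≤ c ⬝ᵥ x) :
    ∃ y, 0 ≤ y ∧ y ᵥ* A = c ∧ d ≤ y ⬝ᵥ δ := by
  -- the extra generator `(0, -1)` absorbs the slack in `d ≤ y ⬝ᵥ δ`
  let w : Option ι → (σ → ℝ) × ℝ := fun o => o.elim (0, -1) fun i => (A i, δ i)
  have hmem : (c, d) ∈ finsetCone w univ := by
    by_contra hnot
    obtain ⟨f, u, hfK, hfcd⟩ := geometric_hahn_banach_closed_point
      (convex_finsetCone w univ) (isClosed_finsetCone w univ) hnot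
    have hgen : ∀ o, f (w o) ≤ 0 := fun o => by
      by_contra! h
      have := hfK _ (smul_mem_finsetCone w (mem_univ o) (by positivity : 0 ≤ (|u| + 1) / f (w o)))
      rw [map_smul, smul_eq_mul, div_mul_cancel₀ _ h.ne'] at this
      linarith [le_abs_self u]
    have hu : 0 < u := by simpa using hfK 0 ⟨0, by simp, by simp⟩
    obtain ⟨q, e, hf⟩ := exists_dotProduct_add_mul_eq f.toLinearMap
    simp only [ContinuousLinearMap.coe_coe] at hf
    have := dotProduct_add_mul_nonpos_of_forall_le hne hval (q := q) (e := e)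
      (by simpa [w, hf] using hgen none) fun i => by simpa [w, hf] using hgen (some i)
    linarith [hf c d]
  obtain ⟨y, hy, hyw⟩ := hmem
  rw [Fintype.sum_option] at hyw
  have hc := congrArg Prod.fst hyw
  have hd := congrArg Prod.snd hyw
  simp [w, Prod.fst_sum, Prod.snd_sum] at hc hd
  refine ⟨fun i => y (some i), fun i => hy _ (mem_univ _), ?_, ?_⟩
  · rw [vecMul_eq_sum, ← hc]
  · rw [← hd]
    show _ ≤ ∑ i, y (some i) * δ i
    linarith [hy none (mem_univ _)]

theorem exists_multiplier_of_forall_le [Fintype ι] {α : σ → ℝ} {β : ℝ}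
    (hne : ∃ x, δ ≤ A *ᵥ x ∧ α ⬝ᵥ x ≤ β)
    (hval : ∀ x, δ ≤ A *ᵥ x → α ⬝ᵥ x ≤ β → d ≤ c ⬝ᵥ x) :
    ∃ t ≥ 0, ∀ x, δ ≤ A *ᵥ x → d + t * β ≤ c ⬝ᵥ x + t * (α ⬝ᵥ x) := by
  let A' : Matrix (Option ι) σ ℝ := fun o => o.elim (-α) fun i => A i
  let δ' : Option ι → ℝ := fun o => o.elim (-β) δ
  have hA' : ∀ x, δ' ≤ A' *ᵥ x ↔ δ ≤ A *ᵥ x ∧ α ⬝ᵥ x ≤ β := fun x => by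
    rw [Pi.le_def, Option.forall, and_comm]
    refine Iff.and Iff.rfl ?_
    show -β ≤ -α ⬝ᵥ x ↔ _
    rw [neg_dotProduct, neg_le_neg_iff]
  obtain ⟨y, hy, hyc, hyd⟩ := exists_nonneg_vecMul_eq_of_forall_le (A := A') (δ := δ') (c := c)
    (d := d) (by simpa [hA'] using hne) fun x hx => hval x ((hA' x).1 hx).1 ((hA' x).1 hx).2
  refine ⟨y none, hy none, fun x hx => ?_⟩
  rw [vecMul_eq_sum, Fintype.sum_option] at hyc
  have key : c ⬝ᵥ x + y none * (α ⬝ᵥ x) = (fun i => y (some i)) ⬝ᵥ (A *ᵥ x) := by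
    rw [← hyc, dotProduct_mulVec, vecMul_eq_sum]
    simp [A', add_dotProduct, sum_dotProduct]
  have hyd' : d ≤ -(y none * β) + (fun i => y (some i)) ⬝ᵥ δ := by
    simpa [dotProduct, Fintype.sum_option, δ'] using hyd
  have := dotProduct_le_dotProduct_of_nonneg_left hx (fun i => hy (some i))
  linarith

end Farkas

lemma Int.cast_dotProduct {R κ : Type*} [Ring R] [Fintype κ] (v w : κ → ℤ) :
    ((v ⬝ᵥ w : ℤ) : R) = (Int.cast ∘ v) ⬝ᵥ (Int.cast ∘ w) :=
  RingHom.map_dotProduct (Int.castRingHom R) v w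

lemma Int.cast_vecMul_apply {R κ σ : Type*} [Ring R] [Fintype κ] (v : κ → ℤ)
    (a : Matrix κ σ ℤ) (j : σ) : (((v ᵥ* a) j : ℤ) : R) = ((Int.cast ∘ v) ᵥ* a.map (↑)) j :=
  RingHom.map_vecMul (Int.castRingHom R) a v j

section Chvatal

variable {n : ℕ}

/-- Only the constraint matrix is integral: the right-hand sides are arbitrary reals. -/
def IsIntPolyhedron (Q : Set (Fin n → ℝ)) : Prop :=
  ∃ (ι : Type) (_ : Fintype ι) (a : Matrix ι (Fin n) ℤ) (δ : ι → ℝ),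
    Q = {x | δ ≤ a.map ((↑) : ℤ → ℝ) *ᵥ x}

lemma chvatalClosure_mono {P Q : Set (Fin n → ℝ)} (h : P ⊆ Q) :
    chvatalClosure P ⊆ chvatalClosure Q :=
  fun _ hx c d hcd => hx c d fun y hy => hcd y (h hy)

lemma chvatalClosure_subset_of_forall_le {Q : Set (Fin n → ℝ)} {c : Fin n → ℤ} {d : ℝ}
    (h : ∀ y ∈ Q, d ≤ ∑ j, (c j : ℝ) * y j) :
    chvatalClosure Q ⊆ {x | d ≤ ∑ j, (c j : ℝ) * x j} :=
  fun _ hx => (Int.le_ceil d).trans (hx c d h)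

lemma chvatalClosure_subset_of_forall_eq {Q : Set (Fin n → ℝ)} {α : Fin n → ℤ} {β : ℝ}
    (h : ∀ y ∈ Q, ∑ j, (α j : ℝ) * y j = β) :
    chvatalClosure Q ⊆ {x | ∑ j, (α j : ℝ) * x j = β} := by
  have hneg : ∀ y : Fin n → ℝ, ∑ j, ((-α) j : ℝ) * y j = -∑ j, (α j : ℝ) * y j := fun y => by
    simp [sum_neg_distrib]
  intro x hx
  have hle := chvatalClosure_subset_of_forall_le (c := -α) (d := -β)
    (fun y hy => by rw [hneg, h y hy]) hx
  have hge := chvatalClosure_subset_of_forall_le (fun y hy => (h y hy).ge) hx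
  simp only [Set.mem_ofPred_eq, hneg] at hle hge
  exact le_antisymm (by linarith) hge

lemma IsIntPolyhedron.chvatalClosure_subset {Q : Set (Fin n → ℝ)} (hQ : IsIntPolyhedron Q) :
    chvatalClosure Q ⊆ Q := by
  obtain ⟨ι, _, a, δ, rfl⟩ := hQ
  exact fun x hx i => chvatalClosure_subset_of_forall_le (c := a i) (d := δ i)
    (fun y (hy : δ ≤ _) => hy i) hx

section CutBox

variable {ι : Type*} [Fintype ι]

/-- A box containing every integral combination of the rows of `a` with coefficients in `[0, 1]`. -/
noncomputable def cutBox (a : Matrix ι (Fin n) ℤ) : Finset (Fin n → ℤ) :=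
  Fintype.piFinset fun j => Icc (-∑ i, |a i j|) (∑ i, |a i j|)

lemma row_mem_cutBox (a : Matrix ι (Fin n) ℤ) (i : ι) : a i ∈ cutBox a := by
  simp only [cutBox, Fintype.mem_piFinset, mem_Icc, ← abs_le]
  exact fun j => single_le_sum (f := fun i => |a i j|) (fun _ _ => abs_nonneg _) (mem_univ i)

lemma mem_cutBox_of_vecMul (a : Matrix ι (Fin n) ℤ) {f : ι → ℝ} (hf : ∀ i, f i ∈ Set.Icc 0 1)
    {r : Fin n → ℤ} (hr : ∀ j, (r j : ℝ) = (f ᵥ* a.map (↑)) j) : r ∈ cutBox a := by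
  simp only [cutBox, Fintype.mem_piFinset, mem_Icc, ← abs_le]
  intro j
  have : |(r j : ℝ)| ≤ ∑ i, |(a i j : ℝ)| := by
    rw [hr, vecMul, dotProduct]
    refine (abs_sum_le_sum_abs _ _).trans (sum_le_sum fun i _ => ?_)
    rw [abs_mul, map_apply]
    exact mul_le_of_le_one_left (abs_nonneg _) (abs_le.2 ⟨by linarith [(hf i).1], (hf i).2⟩)
  exact_mod_cast this

/-- Split the Farkas multipliers `y` of a cut into `⌊y⌋` and `fract y`: the integer part combines
rows of `a`, the fractional part gives a cut whose normal lies in `cutBox a`. -/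
lemma exists_cutBox_split {a : Matrix ι (Fin n) ℤ} {δ : ι → ℝ} {c : Fin n → ℤ} {d : ℝ}
    (hne : ∃ y, δ ≤ a.map (↑) *ᵥ y) (hcd : ∀ y, δ ≤ a.map (↑) *ᵥ y → d ≤ ∑ j, (c j : ℝ) * y j) :
    ∃ z : ι → ℤ, 0 ≤ z ∧ ∃ r ∈ cutBox a, ∃ e : ℝ,
      (∀ y, δ ≤ a.map (↑) *ᵥ y → e ≤ ∑ j, (r j : ℝ) * y j) ∧
      c = z ᵥ* a + r ∧ ⌈d⌉ ≤ (z ⬝ᵥ fun i => ⌈δ i⌉) + ⌈e⌉ := by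
  set A : Matrix ι (Fin n) ℝ := a.map (↑)
  obtain ⟨y, hy, hyc, hyd⟩ := exists_nonneg_vecMul_eq_of_forall_le (c := fun j => (c j : ℝ)) hne hcd
  set z : ι → ℤ := fun i => ⌊y i⌋
  set f : ι → ℝ := fun i => Int.fract (y i)
  have hyzf : y = Int.cast ∘ z + f := funext fun i => (Int.floor_add_fract (y i)).symm
  have hz : 0 ≤ z := fun i => Int.floor_nonneg.2 (hy i)
  have hr : ∀ j, ((c - z ᵥ* a) j : ℝ) = (f ᵥ* A) j := fun j => by
    have hyA : y ᵥ* A = (Int.cast ∘ z) ᵥ* A + f ᵥ* A := by rw [← add_vecMul, ← hyzf]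
    rw [Pi.sub_apply, Int.cast_sub, Int.cast_vecMul_apply, ← congrFun hyc j, hyA, Pi.add_apply,
      add_sub_cancel_left]
  refine ⟨z, hz, c - z ᵥ* a, mem_cutBox_of_vecMul a
    (fun i => ⟨Int.fract_nonneg _, (Int.fract_lt_one _).le⟩) hr, f ⬝ᵥ δ, fun w hw => ?_,
    (add_sub_cancel _ _).symm, ?_⟩
  · calc f ⬝ᵥ δ ≤ f ⬝ᵥ (A *ᵥ w) :=
          dotProduct_le_dotProduct_of_nonneg_left hw fun i => Int.fract_nonneg _
      _ = ∑ j, ((c - z ᵥ* a) j : ℝ) * w j := by rw [dotProduct_mulVec]; simp only [dotProduct, hr]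
  · have hzδ : (Int.cast ∘ z) ⬝ᵥ δ ≤ ((z ⬝ᵥ fun i => ⌈δ i⌉ : ℤ) : ℝ) := by
      rw [Int.cast_dotProduct]
      exact dotProduct_le_dotProduct_of_nonneg_left (fun i => Int.le_ceil _)
        fun i => by simpa using hz i
    calc ⌈d⌉ ≤ ⌈(Int.cast ∘ z) ⬝ᵥ δ + f ⬝ᵥ δ⌉ := by
          rw [← add_dotProduct, ← hyzf]; exact Int.ceil_mono hyd
      _ ≤ ⌈(Int.cast ∘ z) ⬝ᵥ δ⌉ + ⌈f ⬝ᵥ δ⌉ := Int.ceil_add_le _ _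
      _ ≤ _ := by gcongr; exact Int.ceil_le.2 hzδ

lemma mem_chvatalClosure_of_cutBox {a : Matrix ι (Fin n) ℤ} {δ : ι → ℝ} {x : Fin n → ℝ}
    (hne : ∃ y, δ ≤ a.map (↑) *ᵥ y)
    (hx : ∀ r ∈ cutBox a, ∀ d : ℝ, (∀ y, δ ≤ a.map (↑) *ᵥ y → d ≤ ∑ j, (r j : ℝ) * y j) →
      (⌈d⌉ : ℝ) ≤ ∑ j, (r j : ℝ) * x j) :
    x ∈ chvatalClosure {y | δ ≤ a.map (↑) *ᵥ y} := by
  intro c d hcd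
  obtain ⟨z, hz, r, hr, e, he, rfl, hd⟩ := exists_cutBox_split hne hcd
  have hrows : (fun i => ((⌈δ i⌉ : ℤ) : ℝ)) ≤ a.map (↑) *ᵥ x := fun i =>
    hx (a i) (row_mem_cutBox a i) (δ i) fun w hw => hw i
  calc (⌈d⌉ : ℝ) ≤ ((z ⬝ᵥ fun i => ⌈δ i⌉ : ℤ) : ℝ) + ⌈e⌉ := by exact_mod_cast hd
    _ ≤ (Int.cast ∘ z) ⬝ᵥ (a.map (↑) *ᵥ x) + ∑ j, (r j : ℝ) * x j := by
        refine add_le_add ?_ (hx r hr e he)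
        rw [Int.cast_dotProduct]
        exact dotProduct_le_dotProduct_of_nonneg_left hrows fun i => by simpa using hz i
    _ = ∑ j, ((z ᵥ* a + r) j : ℝ) * x j := by
        rw [dotProduct_mulVec, dotProduct, ← sum_add_distrib]
        refine sum_congr rfl fun j _ => ?_
        rw [Pi.add_apply, Int.cast_add, Int.cast_vecMul_apply]
        ring

end CutBox

theorem isIntPolyhedron_chvatalClosure {Q : Set (Fin n → ℝ)} (hQ : IsIntPolyhedron Q) :
    IsIntPolyhedron (chvatalClosure Q) := by
  classical
  obtain ⟨ι, _, a, δ, rfl⟩ := hQ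
  by_cases hne : ∃ y, δ ≤ a.map (↑) *ᵥ y
  swap
  · have hQ : IsIntPolyhedron {y | δ ≤ a.map (↑) *ᵥ y} := ⟨ι, inferInstance, a, δ, rfl⟩
    exact ⟨ι, inferInstance, a, δ, hQ.chvatalClosure_subset.antisymm
      fun x hx => absurd ⟨x, hx⟩ hne⟩
  let values (r : Fin n → ℤ) : Set ℝ :=
    (fun y => ∑ j, (r j : ℝ) * y j) '' {y | δ ≤ a.map (↑) *ᵥ y}
  -- `sInf` is junk on normals unbounded below, so only bounded ones index the new system
  let R := (cutBox a).filter fun r => BddBelow (values r)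
  refine ⟨R, inferInstance, Matrix.of fun r => r.1, fun r => ⌈sInf (values r.1)⌉, ?_⟩
  ext x
  constructor
  · exact fun hx r => hx r.1 _ fun y hy => csInf_le (mem_filter.1 r.2).2 ⟨y, hy, rfl⟩
  · refine fun hx => mem_chvatalClosure_of_cutBox hne fun r hr d hd => ?_
    have hbdd : BddBelow (values r) := ⟨d, by rintro _ ⟨y, hy, rfl⟩; exact hd y hy⟩
    have hle : d ≤ sInf (values r) :=
      le_csInf (hne.elim fun y hy => ⟨_, y, hy, rfl⟩) (by rintro _ ⟨y, hy, rfl⟩; exact hd y hy)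
    exact (Int.cast_le.2 (Int.ceil_mono hle)).trans (hx ⟨r, mem_filter.2 ⟨hr, hbdd⟩⟩)

lemma chvatalIter_succ (t : ℕ) (Q : Set (Fin n → ℝ)) :
    chvatalIter (t + 1) Q = chvatalClosure (chvatalIter t Q) :=
  Function.iterate_succ_apply' _ _ _

lemma isIntPolyhedron_chvatalIter {Q : Set (Fin n → ℝ)} (hQ : IsIntPolyhedron Q) (t : ℕ) :
    IsIntPolyhedron (chvatalIter t Q) := by
  induction t with
  | zero => exact hQ
  | succ t ih => rw [chvatalIter_succ]; exact isIntPolyhedron_chvatalClosure ih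

lemma IsIntPolyhedron.chvatalIter_subset {Q : Set (Fin n → ℝ)} (hQ : IsIntPolyhedron Q) (t : ℕ) :
    chvatalIter t Q ⊆ Q := by
  induction t with
  | zero => exact subset_rfl
  | succ t ih =>
    rw [chvatalIter_succ]
    exact (isIntPolyhedron_chvatalIter hQ t).chvatalClosure_subset.trans ih

lemma Rat.exists_nat_mul_eq_intCast {κ : Type*} [Fintype κ] (q : κ → ℚ) :
    ∃ D : ℕ, 0 < D ∧ ∀ k, ∃ z : ℤ, q k * D = z := by
  refine ⟨∏ k, (q k).den, prod_pos fun k _ => (q k).pos, fun k => ?_⟩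
  obtain ⟨e, he⟩ := dvd_prod_of_mem (fun k => (q k).den) (mem_univ k)
  exact ⟨(q k).num * e, by rw [he, Nat.cast_mul, ← mul_assoc, Rat.mul_den_eq_num]; push_cast; rfl⟩

lemma isIntPolyhedron_of_rat {m : ℕ} (A : Matrix (Fin m) (Fin n) ℚ) (b : Fin m → ℝ) :
    IsIntPolyhedron {x | ∀ i, b i ≤ ∑ j, (A i j : ℝ) * x j} := by
  obtain ⟨D, hD, hint⟩ := Rat.exists_nat_mul_eq_intCast fun p : Fin m × Fin n => A p.1 p.2
  choose a ha using fun i j => hint (i, j)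
  refine ⟨Fin m, inferInstance, Matrix.of a, fun i => D * b i, ?_⟩
  ext x
  refine forall_congr' fun i => ?_
  have hrow : ((Matrix.of a).map (↑) *ᵥ x) i = D * ∑ j, (A i j : ℝ) * x j := by
    simp only [mulVec, dotProduct, map_apply, of_apply, mul_sum, ← mul_assoc]
    refine sum_congr rfl fun j _ => ?_
    have := congrArg (fun q : ℚ => (q : ℝ)) (ha i j)
    push_cast at this
    rw [← this, mul_comm (D : ℝ)]
  rw [hrow]
  exact (mul_le_mul_iff_right₀ (by exact_mod_cast hD)).symm

theorem IsIntPolyhedron.chvatalClosure_inter_hyperplane {Q : Set (Fin n → ℝ)}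
    (hQ : IsIntPolyhedron Q) (α : Fin n → ℤ) (β : ℝ)
    (hvalid : ∀ x ∈ Q, β ≤ ∑ j, (α j : ℝ) * x j) :
    chvatalClosure (Q ∩ {x | ∑ j, (α j : ℝ) * x j = β}) =
      chvatalClosure Q ∩ {x | ∑ j, (α j : ℝ) * x j = β} := by
  refine (Set.subset_inter (chvatalClosure_mono Set.inter_subset_left)
    (chvatalClosure_subset_of_forall_eq fun y hy => hy.2)).antisymm ?_
  rintro x ⟨hx, hxH⟩ c d hcd
  obtain ⟨B, rfl⟩ : ∃ B : ℤ, (B : ℝ) = β :=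
    ⟨⌈β⌉, le_antisymm (hxH ▸ hx α β hvalid) (Int.le_ceil β)⟩
  have hxQ := hQ.chvatalClosure_subset hx
  obtain ⟨ι, _, a, δ, rfl⟩ := hQ
  obtain ⟨t, -, hmult⟩ := exists_multiplier_of_forall_le (A := a.map (↑))
    (α := fun j => (α j : ℝ)) (c := fun j => (c j : ℝ)) ⟨x, hxQ, hxH.le⟩
    fun y hy hyα => hcd y ⟨hy, le_antisymm hyα (hvalid y hy)⟩
  set μ := ⌈t⌉
  have hcomb : ∀ y : Fin n → ℝ,
      ∑ j, ((c + μ • α) j : ℝ) * y j = ∑ j, (c j : ℝ) * y j + μ * ∑ j, (α j : ℝ) * y j :=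
    fun y => by simp [add_mul, sum_add_distrib, mul_sum, mul_assoc]
  have hcut : ∀ y ∈ {y | δ ≤ a.map (↑) *ᵥ y}, d + μ * B ≤ ∑ j, ((c + μ • α) j : ℝ) * y j := by
    intro y hy
    have h1 := hmult y hy
    have h2 : (μ - t) * B ≤ (μ - t) * ∑ j, (α j : ℝ) * y j :=
      mul_le_mul_of_nonneg_left (hvalid y hy) (by linarith [Int.le_ceil t])
    rw [hcomb]
    simp only [dotProduct] at h1
    linarith
  have := hx _ _ hcut
  rw [← Int.cast_mul, Int.ceil_add_intCast, hcomb, hxH] at this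
  push_cast at this
  linarith

end Chvatal

/-- for P = {x : Ax ≥ b} with A rational and b real, and a face
F = P ∩ {x : αᵀx = β} (α integral, αᵀx ≥ β valid for P), the t-th Chvátal closure
of F equals the intersection of the t-th Chvátal closure of P with F. -/
theorem stmt7 {m n : ℕ} (A : Matrix (Fin m) (Fin n) ℚ) (b : Fin m → ℝ)
    (P F : Set (Fin n → ℝ))
    (hP : P = {x | ∀ i, b i ≤ ∑ j, (A i j : ℝ) * x j})
    (α : Fin n → ℤ) (β : ℝ)
    (hvalid : ∀ x ∈ P, β ≤ ∑ j, (α j : ℝ) * x j)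
    (hF : F = P ∩ {x | ∑ j, (α j : ℝ) * x j = β}) :
    ∀ t : ℕ, chvatalIter t F = chvatalIter t P ∩ F := by
  have hPpoly : IsIntPolyhedron P := hP ▸ isIntPolyhedron_of_rat A b
  have key : ∀ t, chvatalIter t F = chvatalIter t P ∩ {x | ∑ j, (α j : ℝ) * x j = β} := by
    intro t
    induction t with
    | zero => exact hF
    | succ t ih =>
      rw [chvatalIter_succ, chvatalIter_succ, ih,
        (isIntPolyhedron_chvatalIter hPpoly t).chvatalClosure_inter_hyperplane α β
          fun x hx => hvalid x (hPpoly.chvatalIter_subset t hx)]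
  intro t
  rw [key, hF, ← Set.inter_assoc, Set.inter_eq_left.2 (hPpoly.chvatalIter_subset t)]
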